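/- arXiv:1403.7460 — 2 statements merged into one kernel-verified Lean document; each statement's English description precedes it below -/
import Mathlib

section
/- The Chen iterated-integral map Υ^t is a shuffle algebra homomorphism: for all words v, w, Υ^t(v ⧢ w) = Υ^t(v) · Υ^t(w). -/
/-- The shuffle product of two words, as a multiset of words (with multiplicities). -/
def shuffles {α : Type*} : List α → List α → Multiset (List α)
  | [], w => {w}
  | a :: v, [] => {a :: v}
  | a :: v, b :: w =>
      ((shuffles v (b :: w)).map (a :: ·)) + ((shuffles (a :: v) w).map (b :: ·))

/-- Auxiliary form of the Chen iterated integral, where the head of the list is the letter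
of the outermost integral. -/
noncomputable def chenRev {α : Type*} (u : α → ℝ → ℝ) : List α → ℝ → ℝ
  | [], _ => 1
  | a :: v, t => ∫ s in (0:ℝ)..t, chenRev u v s * u a s

/-- The Chen iterated integral `Υ^t(v)`, defined by `Υ^t(1) = 1` and
`Υ^t(v·a_i) = ∫_0^t Υ^s(v) u_i(s) ds`. -/
noncomputable def chen {α : Type*} (u : α → ℝ → ℝ) (v : List α) (t : ℝ) : ℝ :=
  chenRev u v.reverse t

/-!
`chenRev u (a :: v)` is the primitive of `chenRev u v * u a`, so it is absolutely continuous,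
and integration by parts for absolutely continuous primitives `F`, `G` of `f`, `g` gives
`(∫ f) * (∫ g) = ∫ f * G + ∫ F * g`. Applied to `f = chenRev u v * u a` and
`g = chenRev u w * u b`, this is exactly the first-letter recursion of the shuffle product,
so the identity follows by induction on the two words. Since `chen` peels off the last letter,
one first checks that reversing both words reverses their shuffles.
-/

open MeasureTheory Set

section Shuffles
variable {α : Type*}

@[simp]
lemma shuffles_nil_left (w : List α) : shuffles [] w = {w} := by
  cases w <;> simp [shuffles]

@[simp]
lemma shuffles_nil_right (v : List α) : shuffles v [] = {v} := by
  cases v <;> simp [shuffles]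

lemma shuffles_cons_cons (a b : α) (v w : List α) :
    shuffles (a :: v) (b :: w) =
      (shuffles v (b :: w)).map (a :: ·) + (shuffles (a :: v) w).map (b :: ·) := by
  simp [shuffles]

lemma shuffles_append_singleton (v w : List α) (c d : α) :
    shuffles (v ++ [c]) (w ++ [d]) =
      (shuffles v (w ++ [d])).map (· ++ [c]) + (shuffles (v ++ [c]) w).map (· ++ [d]) := by
  induction v generalizing w with
  | nil =>
    induction w with
    | nil => simp [shuffles_cons_cons, add_comm]
    | cons b w ih =>
      simp only [List.nil_append, List.cons_append] at ih ⊢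
      rw [shuffles_cons_cons, ih]
      simp [shuffles_cons_cons, Multiset.map_map, Multiset.cons_swap]
  | cons a v ihv =>
    induction w with
    | nil =>
      have := ihv []
      simp only [List.nil_append, List.cons_append] at this ⊢
      rw [shuffles_cons_cons, this]
      simp [shuffles_cons_cons, Multiset.map_map, add_right_comm]
    | cons b w ihw =>
      have := ihv (b :: w)
      simp only [List.cons_append] at this ihw ⊢
      rw [shuffles_cons_cons, this, ihw, shuffles_cons_cons, shuffles_cons_cons]
      simp only [Multiset.map_add, Multiset.map_map, Function.comp_def, List.cons_append]
      abel

lemma shuffles_reverse (v w : List α) :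
    shuffles v.reverse w.reverse = (shuffles v w).map List.reverse := by
  induction v generalizing w with
  | nil => simp
  | cons a v ihv =>
    induction w with
    | nil => simp
    | cons b w ihw =>
      rw [List.reverse_cons, List.reverse_cons, shuffles_append_singleton, ← List.reverse_cons,
        ← List.reverse_cons, ihv, ihw, shuffles_cons_cons]
      simp [Multiset.map_map]

end Shuffles

theorem IntervalIntegrable.multiset_sum {ι : Type*} {F : ι → ℝ → ℝ} {a b : ℝ}
    {μ : Measure ℝ} (m : Multiset ι) (hF : ∀ i ∈ m, IntervalIntegrable (F i) μ a b) :
    IntervalIntegrable (fun x => (m.map (F · x)).sum) μ a b := by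
  induction m using Multiset.induction_on with
  | empty => exact IntervalIntegrable.zero
  | cons i m ih =>
    simp only [Multiset.map_cons, Multiset.sum_cons]
    exact (hF i (Multiset.mem_cons_self i m)).add
      (ih fun j hj => hF j (Multiset.mem_cons_of_mem hj))

theorem intervalIntegral.integral_multiset_sum {ι : Type*} {F : ι → ℝ → ℝ} {a b : ℝ}
    {μ : Measure ℝ} (m : Multiset ι) (hF : ∀ i ∈ m, IntervalIntegrable (F i) μ a b) :
    ∫ x in a..b, (m.map (F · x)).sum ∂μ = (m.map fun i => ∫ x in a..b, F i x ∂μ).sum := by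
  induction m using Multiset.induction_on with
  | empty => simp
  | cons i m ih =>
    have hm : ∀ j ∈ m, IntervalIntegrable (F j) μ a b :=
      fun j hj => hF j (Multiset.mem_cons_of_mem hj)
    simp only [Multiset.map_cons, Multiset.sum_cons]
    rw [intervalIntegral.integral_add (hF i (Multiset.mem_cons_self i m))
      (IntervalIntegrable.multiset_sum m hm), ih hm]

theorem intervalIntegral.integral_mul_integral_eq_add_integral_primitive {f g : ℝ → ℝ} {a b : ℝ}
    (hf : IntervalIntegrable f volume a b) (hg : IntervalIntegrable g volume a b) :
    (∫ x in a..b, f x) * (∫ x in a..b, g x) =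
      (∫ x in a..b, f x * ∫ y in a..x, g y) + ∫ x in a..b, (∫ y in a..x, f y) * g x := by
  have hF := hf.absolutelyContinuousOnInterval_intervalIntegral left_mem_uIcc
  have hG := hg.absolutelyContinuousOnInterval_intervalIntegral left_mem_uIcc
  have h := hF.integral_deriv_mul_eq_sub hG
  simp only [intervalIntegral.integral_same, mul_zero, sub_zero] at h
  rw [← intervalIntegral.integral_add (hf.mul_continuousOn hG.continuousOn)
    (hg.continuousOn_mul hF.continuousOn), ← h]
  refine intervalIntegral.integral_congr_ae ?_
  filter_upwards [hf.ae_hasDerivAt_integral, hg.ae_hasDerivAt_integral] with x hfx hgx hx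
  have hx' : x ∈ uIcc a b := uIoc_subset_uIcc hx
  rw [(hfx hx' a left_mem_uIcc).deriv, (hgx hx' a left_mem_uIcc).deriv]

section Chen
variable {α : Type*} {u : α → ℝ → ℝ}

lemma chenRev_cons (a : α) (v : List α) (t : ℝ) :
    chenRev u (a :: v) t = ∫ s in (0 : ℝ)..t, chenRev u v s * u a s :=
  rfl

lemma continuousOn_chenRev {T : ℝ} (hu : ∀ a, IntervalIntegrable (u a) volume 0 T)
    (v : List α) : ContinuousOn (chenRev u v) (uIcc 0 T) := by
  induction v with
  | nil => exact continuousOn_const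
  | cons a v ih =>
    exact intervalIntegral.continuousOn_primitive_interval' ((hu a).continuousOn_mul ih)
      left_mem_uIcc

lemma intervalIntegrable_chenRev_mul {T : ℝ} (hu : ∀ a, IntervalIntegrable (u a) volume 0 T)
    (v : List α) (a : α) : IntervalIntegrable (fun s => chenRev u v s * u a s) volume 0 T :=
  (hu a).continuousOn_mul (continuousOn_chenRev hu v)

lemma sum_map_chenRev_cons {t : ℝ} (hu : ∀ a, IntervalIntegrable (u a) volume 0 t)
    (m : Multiset (List α)) (a : α) :
    (m.map fun z => chenRev u (a :: z) t).sum =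
      ∫ s in (0 : ℝ)..t, (m.map fun z => chenRev u z s).sum * u a s := by
  simp only [chenRev_cons, ← Multiset.sum_map_mul_right]
  exact (intervalIntegral.integral_multiset_sum m
    fun z _ => intervalIntegrable_chenRev_mul hu z a).symm

theorem sum_map_chenRev_shuffles (v w : List α) {t : ℝ}
    (hu : ∀ a, IntervalIntegrable (u a) volume 0 t) :
    ((shuffles v w).map fun z => chenRev u z t).sum = chenRev u v t * chenRev u w t := by
  induction v generalizing w t with
  | nil => simp [chenRev]
  | cons a v ihv =>
    induction w generalizing t with
    | nil => simp [chenRev]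
    | cons b w ihw =>
      have hu' : ∀ s ∈ uIcc 0 t, ∀ c, IntervalIntegrable (u c) volume 0 s :=
        fun s hs c => (hu c).mono_set (uIcc_subset_uIcc_left hs)
      rw [shuffles_cons_cons, Multiset.map_add, Multiset.sum_add, Multiset.map_map,
        Multiset.map_map, Function.comp_def, Function.comp_def, sum_map_chenRev_cons hu,
        sum_map_chenRev_cons hu, chenRev_cons a v t, chenRev_cons b w t,
        intervalIntegral.integral_mul_integral_eq_add_integral_primitive
          (intervalIntegrable_chenRev_mul hu v a) (intervalIntegrable_chenRev_mul hu w b)]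
      congr 1 <;> refine intervalIntegral.integral_congr fun s hs => ?_
      · simp only [ihv _ (hu' s hs), ← chenRev_cons]
        ring
      · simp only [ihw (hu' s hs), ← chenRev_cons]
        ring

theorem sum_map_chen_shuffles (v w : List α) {t : ℝ}
    (hu : ∀ a, IntervalIntegrable (u a) volume 0 t) :
    ((shuffles v w).map fun z => chen u z t).sum = chen u v t * chen u w t := by
  have h := sum_map_chenRev_shuffles v.reverse w.reverse hu
  rwa [shuffles_reverse, Multiset.map_map] at h

end Chen

/-- The Chen iterated-integral map is a shuffle algebra homomorphism:
`Υ^t(v ⧢ w) = Υ^t(v) · Υ^t(w)` for all words `v, w`. -/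
theorem stmt4 {n : ℕ} (T M : ℝ) (u : Fin (n + 1) → ℝ → ℝ)
    (hmeas : ∀ i, Measurable (u i))
    (hbd : ∀ i s, s ∈ Set.Icc (0 : ℝ) T → |u i s| ≤ M)
    (v w : List (Fin (n + 1))) (t : ℝ) (ht : t ∈ Set.Icc (0 : ℝ) T) :
    ((shuffles v w).map fun z => chen u z t).sum = chen u v t * chen u w t := by
  refine sum_map_chen_shuffles v w fun i => ?_
  have hint : IntegrableOn (u i) (Icc 0 T) :=
    Measure.integrableOn_of_bounded measure_Icc_lt_top.ne (hmeas i).aestronglyMeasurable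
      (ae_restrict_of_forall_mem measurableSet_Icc fun s hs =>
        (Real.norm_eq_abs _).trans_le (hbd i s hs))
  exact (intervalIntegrable_iff_integrableOn_Icc_of_le ht.1).2
    (hint.mono_set (Icc_subset_Icc_right ht.2))
end

section
/- For n = 2 the coefficient counts ‖F_k‖ satisfy the recursion ‖F_{k+1}‖ = 2‖F_k‖ + Σ_{j=1}^{k−1} binomial(k,j) ‖F_j‖·‖F_{k−j}‖ with ‖F_1‖ = 1, and the unique solution is ‖F_k‖ = k!. -/
/-!
Every coefficient of `F` is nonnegative (induction on the length of the word), so `‖F_k‖` is the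
plain sum of the degree-`k` coefficients. Sorting the words of length `k + 1` by their last letter
turns the fixed-point equation into the recursion: the `a₁`-part contributes `2 ‖F_k‖`, and the
`a₂`-part is the degree-`k` sum of `F ⧢ F`, which is `∑ⱼ C(k,j) ‖F_j‖ ‖F_{k-j}‖` because a choice of
`j` positions splits the words of length `k` bijectively into pairs of words of lengths `j` and
`k - j`. Since `C(k,j) j! (k-j)! = k!`, each of the `k - 1` middle terms equals `k!`, and
`2 k! + (k - 1) k! = (k + 1)!`.
-/

/-- The subword of `w` consisting of the positions in `s` (in order). -/
def extract {α : Type*} (w : List α) (s : Finset ℕ) : List α :=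
  (w.zipIdx.filter fun p => p.2 ∈ s).map Prod.fst

/-- The coefficient of a word `w` in the shuffle product of two noncommutative series. -/
noncomputable def shuffleCoeff {α : Type*} (S T : List α → ℝ) (w : List α) : ℝ :=
  ∑ s ∈ (Finset.range w.length).powerset,
    S (extract w s) * T (extract w (Finset.range w.length \ s))

open Finset

section Extract

variable {α : Type*}

lemma length_extract_le (w : List α) (s : Finset ℕ) : (extract w s).length ≤ w.length := by
  simpa [extract] using List.length_filter_le _ w.zipIdx

lemma extract_append_singleton (w : List α) (x : α) (s : Finset ℕ) :
    extract (w ++ [x]) s = extract w s ++ if w.length ∈ s then [x] else [] := by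
  by_cases h : w.length ∈ s <;> simp [extract, List.zipIdx_append, h]

lemma List.ofFn_snoc {n : ℕ} (f : Fin n → α) (x : α) :
    List.ofFn (Fin.snoc f x) = List.ofFn f ++ [x] := by
  rw [List.ofFn_succ']
  simp

end Extract

lemma Finset.sum_range_succ_eq_sum_Ioo {M : Type*} [AddCommMonoid M] {f : ℕ → M} {k : ℕ}
    (h₀ : f 0 = 0) (hk : f k = 0) : ∑ j ∈ range (k + 1), f j = ∑ j ∈ Ioo 0 k, f j := by
  refine (sum_subset (fun j hj => ?_) fun j hj hj' => ?_).symm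
  · simp only [mem_Ioo, mem_range] at hj ⊢
    omega
  · simp only [mem_Ioo, mem_range] at hj hj'
    obtain rfl | rfl : j = 0 ∨ j = k := by omega
    exacts [h₀, hk]

section CoeffSum

variable {α : Type*} [Fintype α] {M : Type*} [AddCommMonoid M]

lemma sum_ofFn_snoc {k : ℕ} (φ : List α → M) :
    ∑ f : Fin (k + 1) → α, φ (List.ofFn f) = ∑ x, ∑ f : Fin k → α, φ (List.ofFn f ++ [x]) := by
  rw [← Fintype.sum_prod_type', ← (Fin.snocEquiv fun _ => α).sum_comp]
  exact Fintype.sum_congr _ _ fun p => congrArg φ (List.ofFn_snoc p.2 p.1)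

theorem sum_extract_ofFn (s t : Finset ℕ) {k : ℕ} (hst : ∀ i < k, i ∈ s ↔ i ∉ t) :
    ∀ {j m : ℕ} (G : List α → List α → M), #(range k ∩ s) = j → #(range k ∩ t) = m →
      ∑ f : Fin k → α, G (extract (List.ofFn f) s) (extract (List.ofFn f) t) =
        ∑ g : Fin j → α, ∑ h : Fin m → α, G (List.ofFn g) (List.ofFn h) := by
  induction k with
  | zero =>
    rintro j m G hj hm
    obtain rfl : j = 0 := by simpa using hj.symm
    obtain rfl : m = 0 := by simpa using hm.symm
    simp [extract]
  | succ k ih =>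
    intro j m G hj hm
    have ih' := @ih fun i hi => hst i (by omega)
    simp only [sum_ofFn_snoc fun w => G (extract w s) (extract w t), extract_append_singleton,
      List.length_ofFn]
    rw [range_add_one] at hj hm
    by_cases hs : k ∈ s
    · have ht : k ∉ t := (hst k k.lt_add_one).1 hs
      rw [insert_inter_of_mem hs, card_insert_of_notMem (by simp)] at hj
      rw [insert_inter_of_notMem ht] at hm
      subst hj
      simp only [hs, ht, if_true, if_false, List.append_nil]
      rw [sum_ofFn_snoc fun w => ∑ h : Fin m → α, G w (List.ofFn h)]
      exact sum_congr rfl fun x _ => ih' (fun u v => G (u ++ [x]) v) rfl hm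
    · have ht : k ∈ t := by simpa [hs] using (hst k k.lt_add_one).not
      rw [insert_inter_of_notMem hs] at hj
      rw [insert_inter_of_mem ht, card_insert_of_notMem (by simp)] at hm
      subst hm
      simp only [hs, ht, if_true, if_false, List.append_nil, sum_ofFn_snoc]
      exact (sum_congr rfl fun x _ => ih' (fun u v => G u (v ++ [x])) hj rfl).trans sum_comm

def coeffSum (S : List α → M) (k : ℕ) : M :=
  ∑ f : Fin k → α, S (List.ofFn f)

lemma coeffSum_zero (S : List α → M) : coeffSum S 0 = S [] := by
  simp [coeffSum]

lemma coeffSum_succ (S : List α → M) (k : ℕ) :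
    coeffSum S (k + 1) = ∑ x, coeffSum (fun w => S (w ++ [x])) k :=
  sum_ofFn_snoc S

theorem coeffSum_shuffleCoeff (S T : List α → ℝ) (k : ℕ) :
    coeffSum (shuffleCoeff S T) k =
      ∑ j ∈ range (k + 1), k.choose j * (coeffSum S j * coeffSum T (k - j)) := calc
  coeffSum (shuffleCoeff S T) k = ∑ s ∈ (range k).powerset, ∑ f : Fin k → α,
      S (extract (List.ofFn f) s) * T (extract (List.ofFn f) (range k \ s)) := by
    simp only [coeffSum, shuffleCoeff, List.length_ofFn]
    exact sum_comm
  _ = ∑ s ∈ (range k).powerset, coeffSum S #s * coeffSum T (k - #s) := by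
    refine sum_congr rfl fun s hs => ?_
    have hsk : s ⊆ range k := mem_powerset.1 hs
    rw [coeffSum, coeffSum, sum_mul_sum]
    refine sum_extract_ofFn (k := k) s (range k \ s) (by simp_all) (fun u v => S u * T v)
      (by rw [inter_eq_right.2 hsk]) ?_
    rw [inter_eq_right.2 sdiff_subset, card_sdiff_of_subset hsk, card_range]
  _ = _ := by
    simp only [sum_powerset_apply_card (fun j => coeffSum S j * coeffSum T (k - j)), card_range,
      nsmul_eq_mul]

end CoeffSum

/-- Coefficientwise form of `F = a₀ + 2 F·a₁ + (F ⧢ F)·a₂` on the alphabet `Fin 3`: the coefficient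
of `w ++ [a]` in `G·a` is the coefficient of `w` in `G`. -/
def IsRiccatiSeries (F : List (Fin 3) → ℝ) : Prop :=
  ∀ w : List (Fin 3),
    F w = (if w = [(0 : Fin 3)] then 1 else 0) +
      2 * (if w.getLast? = some 1 then F w.dropLast else 0) +
      (if w.getLast? = some 2 then shuffleCoeff F F w.dropLast else 0)

namespace IsRiccatiSeries

variable {F : List (Fin 3) → ℝ} (hF : IsRiccatiSeries F)
include hF

lemma apply_nil : F [] = 0 := by
  simp [hF []]

lemma apply_singleton_zero : F [0] = 1 := by
  simp [hF [0]]

lemma apply_append_zero {v : List (Fin 3)} (hv : v ≠ []) : F (v ++ [0]) = 0 := by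
  simp [hF (v ++ [0]), hv]

lemma apply_append_one (v : List (Fin 3)) : F (v ++ [1]) = 2 * F v := by
  simp [hF (v ++ [1]), List.append_eq_singleton_iff]

lemma apply_append_two (v : List (Fin 3)) : F (v ++ [2]) = shuffleCoeff F F v := by
  simp [hF (v ++ [2]), List.append_eq_singleton_iff]

theorem nonneg (w : List (Fin 3)) : 0 ≤ F w := by
  induction hn : w.length using Nat.strong_induction_on generalizing w with
  | _ n ih =>
  obtain rfl | ⟨v, x, rfl⟩ := w.eq_nil_or_concat'
  · exact hF.apply_nil.ge
  have ih' (u : List (Fin 3)) (hu : u.length ≤ v.length) : 0 ≤ F u :=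
    ih _ (by simp only [List.length_append, List.length_singleton] at hn; omega) u rfl
  match x with
  | 0 =>
    by_cases hv : v = []
    · simp [hv, hF.apply_singleton_zero]
    · simp [hF.apply_append_zero hv]
  | 1 =>
    rw [hF.apply_append_one]
    exact mul_nonneg zero_le_two (ih' v le_rfl)
  | 2 =>
    rw [hF.apply_append_two]
    exact sum_nonneg fun s _ =>
      mul_nonneg (ih' _ (length_extract_le _ _)) (ih' _ (length_extract_le _ _))

theorem coeffSum_one : coeffSum F 1 = 1 := by
  rw [coeffSum_succ, Fin.sum_univ_three]
  simp only [coeffSum_zero, hF.apply_append_one, hF.apply_append_two, List.nil_append,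
    hF.apply_singleton_zero]
  simp [shuffleCoeff, extract, hF.apply_nil]

theorem coeffSum_succ_eq {k : ℕ} (hk : 1 ≤ k) :
    coeffSum F (k + 1) =
      2 * coeffSum F k + ∑ j ∈ Ioo 0 k, (k.choose j : ℝ) * coeffSum F j * coeffSum F (k - j) := by
  have hne (f : Fin k → Fin 3) : List.ofFn f ≠ [] := by
    rw [Ne, List.ofFn_eq_nil_iff]
    omega
  have h0 : coeffSum (fun w => F (w ++ [0])) k = 0 :=
    sum_eq_zero fun f _ => hF.apply_append_zero (hne f)
  have h1 : coeffSum (fun w => F (w ++ [1])) k = 2 * coeffSum F k := by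
    simp only [coeffSum, hF.apply_append_one, mul_sum]
  have h2 : coeffSum (fun w => F (w ++ [2])) k = coeffSum (shuffleCoeff F F) k := by
    simp only [hF.apply_append_two]
  rw [coeffSum_succ, Fin.sum_univ_three, h0, h1, h2, coeffSum_shuffleCoeff,
    sum_range_succ_eq_sum_Ioo (by simp [coeffSum_zero, hF.apply_nil])
      (by simp [coeffSum_zero, hF.apply_nil])]
  simp only [zero_add, mul_assoc]

end IsRiccatiSeries

theorem eq_factorial_of_recurrence {a : ℕ → ℝ} (h₁ : a 1 = 1)
    (hrec : ∀ k, 1 ≤ k →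
      a (k + 1) = 2 * a k + ∑ j ∈ Ioo 0 k, (k.choose j : ℝ) * a j * a (k - j)) :
    ∀ k, 1 ≤ k → a k = k.factorial := by
  intro k hk
  induction k using Nat.strong_induction_on with
  | _ k ih =>
  match k, hk with
  | 1, _ => simpa using h₁
  | k + 2, _ =>
    have hterm : ∀ j ∈ Ioo 0 (k + 1),
        ((k + 1).choose j : ℝ) * a j * a (k + 1 - j) = (k + 1).factorial := by
      intro j hj
      rw [mem_Ioo] at hj
      rw [ih j (by omega) hj.1, ih (k + 1 - j) (by omega) (by omega)]
      exact_mod_cast Nat.choose_mul_factorial_mul_factorial hj.2.le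
    rw [hrec (k + 1) (by omega), sum_congr rfl hterm, sum_const, Nat.card_Ioo,
      ih (k + 1) (by omega) (by omega), nsmul_eq_mul, Nat.factorial_succ (k + 1)]
    push_cast
    ring

/-- For `n = 2` (Riccati): if `F` solves `F = a₀ + 2F·a₁ + (F ⧢ F)·a₂` on the alphabet
`{a₀,a₁,a₂} = Fin 3`, and `N k = ‖F_k‖` is the sum of absolute values of the degree-`k`
coefficients, then `N 1 = 1`, `N(k+1) = 2·N k + ∑_{j=1}^{k-1} C(k,j)·N j·N(k-j)`, and
`N k = k!` for `k ≥ 1`. -/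
theorem stmt14 (F : List (Fin 3) → ℝ)
    (hF : ∀ w : List (Fin 3),
      F w = (if w = [(0 : Fin 3)] then 1 else 0) +
        2 * (if w.getLast? = some 1 then F w.dropLast else 0) +
        (if w.getLast? = some 2 then shuffleCoeff F F w.dropLast else 0))
    (N : ℕ → ℝ) (hN : ∀ k, N k = ∑ f : Fin k → Fin 3, |F (List.ofFn f)|) :
    N 1 = 1 ∧
    (∀ k : ℕ, 1 ≤ k →
      N (k + 1) = 2 * N k + ∑ j ∈ Finset.Ioo 0 k, (k.choose j : ℝ) * N j * N (k - j)) ∧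
    (∀ k : ℕ, 1 ≤ k → N k = (k.factorial : ℝ)) := by
  have hF : IsRiccatiSeries F := hF
  obtain rfl : N = coeffSum F := funext fun k => by
    rw [hN]
    exact sum_congr rfl fun f _ => abs_of_nonneg (hF.nonneg _)
  have hrec (k : ℕ) (hk : 1 ≤ k) := hF.coeffSum_succ_eq hk
  exact ⟨hF.coeffSum_one, hrec, eq_factorial_of_recurrence hF.coeffSum_one hrec⟩
end
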